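/- Let ω(A) = Tr(A·R) be the linear functional with density matrix R ∈ 𝔄, where R = Σ_{𝔍,𝔍'∈𝒫₊} r_{𝔍𝔍'}·Θ(C_𝔍)∘C_{𝔍'}, and let ⟨A,B⟩ := ω(Θ(A)∘B). The following are equivalent: (a) ω is reflection invariant, i.e. ω(Θ(A)) = conj(ω(A)) for all A ∈ 𝔄; (b) Θ(R) = R; (c) the matrix (r_{𝔍𝔍'}) is hermitian, r_{𝔍'𝔍} = conj(r_{𝔍𝔍'}); (d) the sesquilinear form ⟨·,·⟩ is hermitian on 𝔄₊, i.e. ⟨A,B⟩ = conj(⟨B,A⟩) for all A, B ∈ 𝔄₊. -/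

import Mathlib

open ComplexOrder

noncomputable section

/-- The setting of the paper: a finite set `Λ` with a fixed-point free involution `ϑ`
exchanging `Λp` and its complement, the Clifford algebra (algebra of Majoranas) `carrier`
with self-adjoint generators `c i`, the global gauge automorphism `gauge`, the antilinear
reflection `*`-automorphism `Θ`, a square root `ζ` of `-1`, the twisted product `twist`,
a choice `P` of orderings of the subsets of `Λp` (giving the bases
`{C J : J ∈ P}` of `𝔄₊` and `{Θ(C J) ∘ C J' : J, J' ∈ P}` of `𝔄`),
and the tracial state `Tr` picking out the coefficient of `1` in the basis expansion. -/
structure MajoranaSetting where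
  Λ : Type
  [fintypeΛ : Fintype Λ]
  [deceqΛ : DecidableEq Λ]
  ϑ : Λ → Λ
  ϑ_invol : Function.Involutive ϑ
  ϑ_fixfree : ∀ i, ϑ i ≠ i
  Λp : Finset Λ
  ϑ_exch : ∀ i, i ∈ Λp ↔ ϑ i ∉ Λp
  carrier : Type
  [nring : NormedRing carrier]
  [nalg : NormedAlgebra ℂ carrier]
  [cmpl : CompleteSpace carrier]
  [starring : StarRing carrier]
  [starmod : StarModule ℂ carrier]
  c : Λ → carrier
  c_star : ∀ i, star (c i) = c i
  clifford : ∀ i j, c i * c j + c j * c i = if i = j then (2 : carrier) else 0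
  gauge : carrier ≃ₐ[ℂ] carrier
  gauge_c : ∀ i, gauge (c i) = - c i
  Θ : carrier → carrier
  Θ_add : ∀ x y, Θ (x + y) = Θ x + Θ y
  Θ_smul : ∀ (z : ℂ) (x), Θ (z • x) = (starRingEnd ℂ z) • Θ x
  Θ_mul : ∀ x y, Θ (x * y) = Θ x * Θ y
  Θ_star : ∀ x, Θ (star x) = star (Θ x)
  Θ_invol : ∀ x, Θ (Θ x) = x
  Θ_c : ∀ i, Θ (c i) = c (ϑ i)
  ζ : ℂ
  ζ_sq : ζ ^ 2 = -1
  twist : carrier → carrier → carrier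
  twist_add_left : ∀ x x' y, twist (x + x') y = twist x y + twist x' y
  twist_add_right : ∀ x y y', twist x (y + y') = twist x y + twist x y'
  twist_smul_left : ∀ (z : ℂ) (x y), twist (z • x) y = z • twist x y
  twist_smul_right : ∀ (z : ℂ) (x y), twist x (z • y) = z • twist x y
  twist_spec : ∀ (Am Ap Bm Bp : carrier) (a b a' b' : ℕ),
    a ≤ 1 → b ≤ 1 → a' ≤ 1 → b' ≤ 1 →
    Am ∈ Algebra.adjoin ℂ (c '' {i | i ∉ Λp}) →
    Ap ∈ Algebra.adjoin ℂ (c '' {i | i ∈ Λp}) →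
    Bm ∈ Algebra.adjoin ℂ (c '' {i | i ∉ Λp}) →
    Bp ∈ Algebra.adjoin ℂ (c '' {i | i ∈ Λp}) →
    gauge Am = ((-1 : ℂ) ^ a) • Am →
    gauge Ap = ((-1 : ℂ) ^ b) • Ap →
    gauge Bm = ((-1 : ℂ) ^ a') • Bm →
    gauge Bp = ((-1 : ℂ) ^ b') • Bp →
    twist (Am * Ap) (Bm * Bp)
      = ζ ^ ((a * b' : ℤ) - (b * a' : ℤ)) • (Am * Ap * (Bm * Bp))
  P : Finset (List Λ)
  P_nodup : ∀ J ∈ P, J.Nodup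
  P_sub : ∀ J ∈ P, ∀ i ∈ J, i ∈ Λp
  P_unique : ∀ s : Finset Λ, s ⊆ Λp → ∃! J, J ∈ P ∧ J.toFinset = s
  Tr : carrier →ₗ[ℂ] ℂ
  Tr_basis : ∀ J ∈ P, ∀ J' ∈ P,
    Tr (twist (Θ ((J.map c).prod)) ((J'.map c).prod))
      = if J = [] ∧ J' = [] then 1 else 0
  basis_indep : LinearIndependent ℂ
    (fun p : {J // J ∈ P} × {J // J ∈ P} =>
      twist (Θ ((p.1.1.map c).prod)) ((p.2.1.map c).prod))
  basis_span : ∀ x : carrier, x ∈ Submodule.span ℂ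
    (Set.range fun p : {J // J ∈ P} × {J // J ∈ P} =>
      twist (Θ ((p.1.1.map c).prod)) ((p.2.1.map c).prod))
  plus_span : ∀ x ∈ Algebra.adjoin ℂ (c '' {i | i ∈ Λp}),
    x ∈ Submodule.span ℂ (Set.range fun J : {J // J ∈ P} => ((J.1.map c).prod))

attribute [instance] MajoranaSetting.fintypeΛ MajoranaSetting.deceqΛ
  MajoranaSetting.nring MajoranaSetting.nalg MajoranaSetting.cmpl
  MajoranaSetting.starring MajoranaSetting.starmod

namespace MajoranaSetting

variable (S : MajoranaSetting)

/-- The subalgebra `𝔄₊` generated by the Majoranas on the `+` side. -/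
def Aplus : Subalgebra ℂ S.carrier := Algebra.adjoin ℂ (S.c '' {i | i ∈ S.Λp})

/-- The subalgebra `𝔄₋` generated by the Majoranas on the `-` side. -/
def Aminus : Subalgebra ℂ S.carrier := Algebra.adjoin ℂ (S.c '' {i | i ∉ S.Λp})

/-- The monomial `C_𝔍 = c_{i₁} ⋯ c_{i_k}`. -/
def C (J : List S.Λ) : S.carrier := (J.map S.c).prod

/-- `q_𝔍 = (-1)^{k(k-1)/2}`. -/
def q (J : List S.Λ) : ℂ := (-1 : ℂ) ^ (J.length * (J.length - 1) / 2)

/-- `s_𝔍 = ζ^{k(k-1)/2}`. -/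
def sgn (J : List S.Λ) : ℂ := S.ζ ^ (J.length * (J.length - 1) / 2)

/-- The exponential `e^x` in the (finite-dimensional) algebra `𝔄`. -/
def expm (x : S.carrier) : S.carrier := NormedSpace.exp x

/-- The Hamiltonian `H = -∑_{𝔍,𝔍' ∈ 𝒫₊} J_{𝔍𝔍'} Θ(C_𝔍) ∘ C_𝔍'`
determined by coupling constants `Jc`. -/
def Ham (Jc : List S.Λ → List S.Λ → ℂ) : S.carrier :=
  - ∑ J ∈ S.P, ∑ J' ∈ S.P, Jc J J' • S.twist (S.Θ (S.C J)) (S.C J')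

/-- The index type of the basis `{C J : J ∈ 𝒫₊}`. -/
abbrev PIdx := {J : List S.Λ // J ∈ S.P}

/-- The index type `𝒫₊ - {∅}` of couplings across the reflection plane. -/
abbrev PIdx0 := {p : S.PIdx // p.1 ≠ []}

/-- The full matrix of coupling constants. -/
def Jmat (Jc : List S.Λ → List S.Λ → ℂ) : Matrix S.PIdx S.PIdx ℂ :=
  Matrix.of fun p q => Jc p.1 q.1

/-- The matrix `J⁰` of coupling constants across the reflection plane. -/
def Jmat0 (Jc : List S.Λ → List S.Λ → ℂ) : Matrix S.PIdx0 S.PIdx0 ℂ :=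
  Matrix.of fun p q => Jc p.1.1 q.1.1

end MajoranaSetting

/-!
`Θ` maps the basis element `Θ(C_𝔍) ∘ C_𝔍'` to `Θ(C_𝔍') ∘ C_𝔍`, so `Tr ∘ Θ = conj ∘ Tr`; this gives
(b) ⇒ (a), and (b) ⇔ (c) by comparing coefficients in the basis. For (a) ⇒ (b) the pairing
`(B, x) ↦ Tr(B x)` must be nondegenerate: pairing `Θ(C_K) C_K'` with `Θ(C_J) ∘ C_J'` gives, up to a
phase, `conj Tr(C_K C_J) · Tr(C_K' C_J')`, and `Tr(C_K C_J)` vanishes for `K ≠ J` because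
`x ↦ c_a gauge(x) c_a`, with `a` in exactly one of `K`, `J`, preserves `Tr` on `𝔄₊` but negates
`C_K C_J`. Finally (d) is (a) tested on `A = Θ(B') ∘ A'` with `A', B' ∈ 𝔄₊`, which span `𝔄`,
since `Θ(Θ(A) ∘ B) = Θ(B) ∘ A` on `𝔄₊`.
-/

namespace MajoranaSetting

variable (S : MajoranaSetting)

theorem c_mul_self (i : S.Λ) : S.c i * S.c i = 1 := by
  have h : (2 : ℂ) • (S.c i * S.c i) = (2 : ℂ) • 1 := by
    rw [two_smul, two_smul, S.clifford i i, if_pos rfl, one_add_one_eq_two]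
  exact smul_right_injective _ two_ne_zero h

theorem c_mul_c_of_ne {i j : S.Λ} (h : i ≠ j) : S.c i * S.c j = -(S.c j * S.c i) :=
  eq_neg_of_add_eq_zero_left ((S.clifford i j).trans (if_neg h))

@[simp] theorem C_nil : S.C [] = 1 := rfl

theorem C_cons (i : S.Λ) (J : List S.Λ) : S.C (i :: J) = S.c i * S.C J := List.prod_cons

theorem C_append (J J' : List S.Λ) : S.C (J ++ J') = S.C J * S.C J' := by
  simp [C]

theorem c_mul_C (i : S.Λ) (M : List S.Λ) :
    S.c i * S.C M = (-1 : ℂ) ^ (M.length + M.count i) • (S.C M * S.c i) := by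
  induction M with
  | nil => simp
  | cons j M ih =>
    rw [C_cons, ← mul_assoc, List.length_cons, mul_assoc _ (S.C M)]
    by_cases hij : i = j
    · subst hij
      rw [S.c_mul_self, one_mul, ← mul_assoc, ih, smul_mul_assoc, mul_assoc, S.c_mul_self,
        mul_one, smul_smul, ← pow_add, List.count_cons_self, Even.neg_one_pow, one_smul]
      exact ⟨M.length + M.count i + 1, by ring⟩
    · rw [S.c_mul_c_of_ne hij, neg_mul, mul_assoc, ih, mul_smul_comm, ← mul_assoc,
        List.count_cons_of_ne (Ne.symm hij), add_right_comm, pow_succ, mul_neg_one, neg_smul]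

theorem C_mul_C_of_disjoint {L L' : List S.Λ} (h : L.Disjoint L') :
    S.C L * S.C L' = (-1 : ℂ) ^ (L.length * L'.length) • (S.C L' * S.C L) := by
  induction L with
  | nil => simp
  | cons i L ih =>
    obtain ⟨hi, hL⟩ := List.disjoint_cons_left.mp h
    rw [C_cons, mul_assoc, ih hL, mul_smul_comm, ← mul_assoc, S.c_mul_C,
      List.count_eq_zero_of_not_mem hi, add_zero, smul_mul_assoc, smul_smul, ← pow_add,
      mul_assoc, List.length_cons, add_one_mul, add_comm]

theorem C_mul_self {J : List S.Λ} (h : J.Nodup) : S.C J * S.C J = S.q J • 1 := by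
  induction J with
  | nil => simp [q]
  | cons i J ih =>
    obtain ⟨hi, hJ⟩ := List.nodup_cons.mp h
    rw [C_cons]
    nth_rewrite 1 [S.c_mul_C]
    rw [List.count_eq_zero_of_not_mem hi, add_zero, smul_mul_assoc, mul_assoc,
      ← mul_assoc (S.c i), S.c_mul_self, one_mul, ih hJ, smul_smul, q, q, List.length_cons,
      Nat.triangle_succ, pow_add, mul_comm]

theorem q_ne_zero (J : List S.Λ) : S.q J ≠ 0 :=
  pow_ne_zero _ (by norm_num)

theorem Θ_zero : S.Θ 0 = 0 := by
  simpa using S.Θ_smul 0 0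

theorem Θ_one : S.Θ 1 = 1 := by
  simpa [S.Θ_invol] using congrArg S.Θ (S.Θ_mul (S.Θ 1) 1)

theorem Θ_sum {ι : Type*} (s : Finset ι) (f : ι → S.carrier) :
    S.Θ (∑ i ∈ s, f i) = ∑ i ∈ s, S.Θ (f i) :=
  map_sum (AddMonoidHom.mk' S.Θ S.Θ_add) f s

theorem Θ_C (J : List S.Λ) : S.Θ (S.C J) = S.C (J.map S.ϑ) := by
  induction J with
  | nil => exact S.Θ_one
  | cons i J ih => rw [C_cons, S.Θ_mul, ih, S.Θ_c, List.map_cons, C_cons]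

theorem gauge_C (J : List S.Λ) : S.gauge (S.C J) = (-1 : ℂ) ^ J.length • S.C J := by
  induction J with
  | nil => simp
  | cons i J ih =>
    rw [C_cons, map_mul, ih, S.gauge_c, mul_smul_comm, List.length_cons, pow_succ, mul_neg_one,
      neg_smul, neg_mul, smul_neg]

theorem C_mem_adjoin {s : Set S.Λ} {J : List S.Λ} (h : ∀ i ∈ J, i ∈ s) :
    S.C J ∈ Algebra.adjoin ℂ (S.c '' s) := by
  induction J with
  | nil => exact one_mem _
  | cons i J ih =>
    rw [C_cons]
    exact mul_mem (Algebra.subset_adjoin ⟨i, h i List.mem_cons_self, rfl⟩)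
      (ih fun j hj => h j (List.mem_cons_of_mem _ hj))

theorem ζ_ne_zero : S.ζ ≠ 0 := by
  intro h
  simpa [h] using S.ζ_sq

theorem conj_ζ : starRingEnd ℂ S.ζ = -S.ζ := by
  rcases mul_self_eq_mul_self_iff.mp (show S.ζ * S.ζ = Complex.I * Complex.I by
    rw [← sq, ← sq, S.ζ_sq, Complex.I_sq]) with h | h <;> simp [h]

theorem nil_mem_P : [] ∈ S.P := by
  obtain ⟨J, ⟨hJP, hJ⟩, -⟩ := S.P_unique ∅ (Finset.empty_subset _)
  rwa [← (List.toFinset_eq_empty_iff J).mp hJ]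

theorem disjoint_map_ϑ {J J' : List S.Λ} (hJ : ∀ i ∈ J, i ∈ S.Λp) (hJ' : ∀ i ∈ J', i ∈ S.Λp) :
    J.Disjoint (J'.map S.ϑ) := by
  intro i hi hi'
  obtain ⟨j, hj, rfl⟩ := List.mem_map.mp hi'
  exact (S.ϑ_exch j).mp (hJ' j hj) (hJ _ hi)

def twistBasis (J J' : List S.Λ) : S.carrier := S.twist (S.Θ (S.C J)) (S.C J')

theorem twistBasis_eq_smul {J J' : List S.Λ} (hJ : ∀ i ∈ J, i ∈ S.Λp)
    (hJ' : ∀ i ∈ J', i ∈ S.Λp) :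
    S.twistBasis J J' = S.ζ ^ (J.length % 2 * (J'.length % 2)) • (S.Θ (S.C J) * S.C J') := by
  have hΘJ : S.Θ (S.C J) ∈ Algebra.adjoin ℂ (S.c '' {i | i ∉ S.Λp}) := by
    rw [Θ_C]
    refine S.C_mem_adjoin fun i hi => ?_
    obtain ⟨j, hj, rfl⟩ := List.mem_map.mp hi
    exact (S.ϑ_exch j).mp (hJ j hj)
  have h := S.twist_spec (S.Θ (S.C J)) 1 1 (S.C J') (J.length % 2) 0 0 (J'.length % 2)
    (by omega) (by omega) (by omega) (by omega) hΘJ (one_mem _) (one_mem _) (S.C_mem_adjoin hJ')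
    (by rw [Θ_C, gauge_C, List.length_map, ← neg_one_pow_eq_pow_mod_two]) (by simp) (by simp)
    (by rw [gauge_C, ← neg_one_pow_eq_pow_mod_two])
  rw [mul_one, one_mul] at h
  rw [twistBasis, h, ← zpow_natCast]
  push_cast
  ring_nf

theorem Θ_twistBasis {J J' : List S.Λ} (hJ : ∀ i ∈ J, i ∈ S.Λp) (hJ' : ∀ i ∈ J', i ∈ S.Λp) :
    S.Θ (S.twistBasis J J') = S.twistBasis J' J := by
  rw [S.twistBasis_eq_smul hJ hJ', S.twistBasis_eq_smul hJ' hJ, S.Θ_smul, S.Θ_mul, S.Θ_invol,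
    map_pow, conj_ζ, Θ_C S J', S.C_mul_C_of_disjoint (S.disjoint_map_ϑ hJ hJ'), List.length_map,
    smul_smul, ← Θ_C, mul_comm (J'.length % 2), neg_one_pow_eq_pow_mod_two, Nat.mul_mod,
    ← neg_one_pow_eq_pow_mod_two, ← mul_pow, neg_mul_neg, mul_one]

theorem mem_span_twistBasis (x : S.carrier) :
    x ∈ Submodule.span ℂ (Set.range fun p : S.PIdx × S.PIdx => S.twistBasis p.1 p.2) :=
  S.basis_span x

theorem mem_span_C {x : S.carrier} (hx : x ∈ S.Aplus) :
    x ∈ Submodule.span ℂ (Set.range fun J : S.PIdx => S.C J.1) :=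
  S.plus_span x hx

theorem Tr_twistBasis {J J' : List S.Λ} (hJ : J ∈ S.P) (hJ' : J' ∈ S.P) :
    S.Tr (S.twistBasis J J') = if J = [] ∧ J' = [] then 1 else 0 :=
  S.Tr_basis J hJ J' hJ'

theorem Tr_C {M : List S.Λ} (hM : M ∈ S.P) : S.Tr (S.C M) = if M = [] then 1 else 0 := by
  simpa [S.twistBasis_eq_smul (J := []) (by simp) (S.P_sub M hM), Θ_one]
    using S.Tr_twistBasis S.nil_mem_P hM

theorem Tr_Θ (x : S.carrier) : S.Tr (S.Θ x) = starRingEnd ℂ (S.Tr x) := by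
  induction S.mem_span_twistBasis x using Submodule.span_induction with
  | mem y hy =>
    obtain ⟨⟨⟨J, hJ⟩, ⟨J', hJ'⟩⟩, rfl⟩ := hy
    rw [S.Θ_twistBasis (S.P_sub J hJ) (S.P_sub J' hJ'), S.Tr_twistBasis hJ' hJ,
      S.Tr_twistBasis hJ hJ']
    simp [apply_ite (starRingEnd ℂ), and_comm]
  | zero => simp [Θ_zero]
  | add a b _ _ ha hb => rw [S.Θ_add, map_add, map_add, ha, hb, map_add]
  | smul z a _ ha => rw [S.Θ_smul, map_smul, map_smul, ha, smul_eq_mul, smul_eq_mul, map_mul]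

theorem Tr_one : S.Tr 1 = 1 := by
  simpa using S.Tr_C S.nil_mem_P

theorem c_mul_gauge_C_mul_c (a : S.Λ) (M : List S.Λ) :
    S.c a * S.gauge (S.C M) * S.c a = (-1 : ℂ) ^ M.count a • S.C M := by
  rw [gauge_C, mul_smul_comm, S.c_mul_C, smul_mul_assoc, smul_mul_assoc, mul_assoc,
    S.c_mul_self, mul_one, smul_smul, ← pow_add, ← add_assoc, ← two_mul, pow_add, pow_mul,
    neg_one_sq, one_pow, one_mul]

theorem Tr_c_mul_gauge_mul_c (a : S.Λ) {x : S.carrier} (hx : x ∈ S.Aplus) :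
    S.Tr (S.c a * S.gauge x * S.c a) = S.Tr x := by
  let φ : S.carrier →ₗ[ℂ] S.carrier :=
    LinearMap.mulLeft ℂ (S.c a) ∘ₗ LinearMap.mulRight ℂ (S.c a) ∘ₗ S.gauge.toLinearMap
  have hC : Set.EqOn (S.Tr ∘ₗ φ) S.Tr (Set.range fun J : S.PIdx => S.C J.1) := by
    rintro _ ⟨⟨M, hM⟩, rfl⟩
    simp only [φ, LinearMap.comp_apply, LinearMap.mulLeft_apply, LinearMap.mulRight_apply,
      AlgEquiv.toLinearMap_apply, ← mul_assoc, c_mul_gauge_C_mul_c, map_smul, S.Tr_C hM]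
    split_ifs with h <;> simp [h]
  simpa [φ, mul_assoc] using LinearMap.eqOn_span' hC (S.mem_span_C hx)

theorem toFinset_injOn_P : Set.InjOn List.toFinset (S.P : Set (List S.Λ)) := by
  intro K hK J hJ h
  obtain ⟨L, -, huniq⟩ :=
    S.P_unique K.toFinset fun i hi => S.P_sub K hK i (List.mem_toFinset.mp hi)
  exact (huniq K ⟨hK, rfl⟩).trans (huniq J ⟨hJ, h.symm⟩).symm

theorem Tr_C_mul_C_of_ne {K J : List S.Λ} (hK : K ∈ S.P) (hJ : J ∈ S.P) (hne : K ≠ J) :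
    S.Tr (S.C K * S.C J) = 0 := by
  obtain ⟨a, ha⟩ : ∃ a, ¬(a ∈ K ↔ a ∈ J) := by
    by_contra! h
    exact hne (S.toFinset_injOn_P hK hJ (Finset.ext fun a => by simpa using h a))
  have hcount : (K ++ J).count a = 1 := by
    rw [List.count_append]
    by_cases haK : a ∈ K
    · rw [List.count_eq_one_of_mem (S.P_nodup K hK) haK, List.count_eq_zero_of_not_mem (by tauto)]
    · rw [List.count_eq_zero_of_not_mem haK, List.count_eq_one_of_mem (S.P_nodup J hJ) (by tauto)]
  have hplus : S.C (K ++ J) ∈ S.Aplus := S.C_mem_adjoin fun i hi => by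
    rcases List.mem_append.mp hi with hi | hi
    exacts [S.P_sub K hK i hi, S.P_sub J hJ i hi]
  have h := S.Tr_c_mul_gauge_mul_c a hplus
  rw [c_mul_gauge_C_mul_c, hcount, pow_one, neg_one_smul, map_neg, neg_eq_iff_add_eq_zero,
    ← two_mul, mul_eq_zero, C_append] at h
  exact h.resolve_left two_ne_zero

theorem Tr_C_mul_C {K J : List S.Λ} (hK : K ∈ S.P) (hJ : J ∈ S.P) :
    S.Tr (S.C K * S.C J) = if K = J then S.q K else 0 := by
  split_ifs with h
  · rw [← h, S.C_mul_self (S.P_nodup K hK), map_smul, S.Tr_one, smul_eq_mul, mul_one]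
  · exact S.Tr_C_mul_C_of_ne hK hJ h

theorem Tr_Θ_mul_of_mem {x y : S.carrier} (hx : x ∈ S.Aplus) (hy : y ∈ S.Aplus) :
    S.Tr (S.Θ x * y) = starRingEnd ℂ (S.Tr x) * S.Tr y := by
  have hx' := S.mem_span_C hx
  have hy' := S.mem_span_C hy
  clear hx hy
  induction hx', hy' using Submodule.span_induction₂ with
  | mem_mem x y hx hy =>
    obtain ⟨⟨M, hM⟩, rfl⟩ := hx
    obtain ⟨⟨M', hM'⟩, rfl⟩ := hy
    by_cases h0 : M = [] ∧ M' = []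
    · obtain ⟨rfl, rfl⟩ := h0
      simp [Θ_one, S.Tr_one]
    · have h := S.Tr_twistBasis hM hM'
      rw [if_neg h0, S.twistBasis_eq_smul (S.P_sub M hM) (S.P_sub M' hM'), map_smul,
        smul_eq_mul, mul_eq_zero, or_iff_right (pow_ne_zero _ S.ζ_ne_zero)] at h
      rw [h, S.Tr_C hM, S.Tr_C hM']
      rcases not_and_or.mp h0 with h1 | h1 <;> simp [h1]
  | zero_left y _ => simp [Θ_zero]
  | zero_right x _ => simp
  | add_left x y z _ _ _ h1 h2 =>
    rw [S.Θ_add, add_mul, map_add, h1, h2, map_add, map_add, add_mul]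
  | add_right x y z _ _ _ h1 h2 => rw [mul_add, map_add, h1, h2, map_add, mul_add]
  | smul_left r x y _ _ h =>
    rw [S.Θ_smul, smul_mul_assoc, map_smul, h, map_smul, smul_eq_mul, smul_eq_mul, map_mul,
      mul_assoc]
  | smul_right r x y _ _ h =>
    rw [mul_smul_comm, map_smul, h, map_smul, smul_eq_mul, smul_eq_mul, mul_left_comm]

theorem Tr_Θ_C_mul_C_mul_twistBasis {K K' J J' : List S.Λ} (hK : K ∈ S.P) (hK' : K' ∈ S.P)
    (hJ : J ∈ S.P) (hJ' : J' ∈ S.P) :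
    S.Tr (S.Θ (S.C K) * S.C K' * S.twistBasis J J') =
      S.ζ ^ (J.length % 2 * (J'.length % 2)) * (-1) ^ (K'.length * J.length) *
        (starRingEnd ℂ (S.Tr (S.C K * S.C J)) * S.Tr (S.C K' * S.C J')) := by
  have hswap : S.C K' * S.Θ (S.C J) =
      (-1 : ℂ) ^ (K'.length * J.length) • (S.Θ (S.C J) * S.C K') := by
    rw [Θ_C, S.C_mul_C_of_disjoint (S.disjoint_map_ϑ (S.P_sub K' hK') (S.P_sub J hJ)),
      List.length_map]
  have hprod : S.Θ (S.C K) * S.C K' * (S.Θ (S.C J) * S.C J') =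
      (-1 : ℂ) ^ (K'.length * J.length) • (S.Θ (S.C K * S.C J) * (S.C K' * S.C J')) := by
    rw [mul_assoc, ← mul_assoc (S.C K'), hswap, smul_mul_assoc, mul_smul_comm, S.Θ_mul]
    simp only [mul_assoc]
  have hplus {L L' : List S.Λ} (hL : L ∈ S.P) (hL' : L' ∈ S.P) : S.C L * S.C L' ∈ S.Aplus :=
    mul_mem (S.C_mem_adjoin (S.P_sub L hL)) (S.C_mem_adjoin (S.P_sub L' hL'))
  rw [S.twistBasis_eq_smul (S.P_sub J hJ) (S.P_sub J' hJ'), mul_smul_comm, map_smul, hprod,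
    map_smul, S.Tr_Θ_mul_of_mem (hplus hK hJ) (hplus hK' hJ'), smul_eq_mul, smul_eq_mul, mul_assoc]

theorem eq_zero_of_forall_Tr_mul_eq_zero {x : S.carrier} (h : ∀ B, S.Tr (B * x) = 0) :
    x = 0 := by
  obtain ⟨g, rfl⟩ := (Submodule.mem_span_range_iff_exists_fun ℂ).mp (S.mem_span_twistBasis x)
  suffices hg : ∀ p, g p = 0 by simp [hg]
  intro p₀
  have hpair := h (S.Θ (S.C p₀.1) * S.C p₀.2)
  rw [Finset.mul_sum, map_sum, Finset.sum_eq_single p₀] at hpair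
  · simpa [mul_smul_comm, S.Tr_Θ_C_mul_C_mul_twistBasis, S.Tr_C_mul_C, S.ζ_ne_zero,
      S.q_ne_zero] using hpair
  · rintro p - hne
    rw [mul_smul_comm, map_smul, S.Tr_Θ_C_mul_C_mul_twistBasis p₀.1.2 p₀.2.2 p.1.2 p.2.2,
      S.Tr_C_mul_C p₀.1.2 p.1.2, S.Tr_C_mul_C p₀.2.2 p.2.2]
    split_ifs with h1 h2
    · exact absurd (Prod.ext (Subtype.ext h1) (Subtype.ext h2)).symm hne
    all_goals simp
  · simp

theorem forall_Tr_Θ_mul_iff {R : S.carrier} :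
    (∀ A, S.Tr (S.Θ A * R) = starRingEnd ℂ (S.Tr (A * R))) ↔ S.Θ R = R := by
  refine ⟨fun h => ?_, fun h A => by rw [← S.Tr_Θ, S.Θ_mul, h]⟩
  refine (sub_eq_zero.mp (S.eq_zero_of_forall_Tr_mul_eq_zero fun B => ?_)).symm
  have hB := h (S.Θ B)
  rw [S.Θ_invol] at hB
  rw [mul_sub, map_sub, hB, ← S.Tr_Θ, S.Θ_mul, S.Θ_invol, sub_self]

theorem sum_P_sum_P {M : Type*} [AddCommMonoid M] (f : List S.Λ → List S.Λ → M) :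
    ∑ J ∈ S.P, ∑ J' ∈ S.P, f J J' = ∑ p : S.PIdx × S.PIdx, f p.1 p.2 := by
  rw [Fintype.sum_prod_type, ← Finset.sum_coe_sort S.P]
  simp only [Finset.sum_coe_sort]

theorem linearIndependent_twistBasis :
    LinearIndependent ℂ fun p : S.PIdx × S.PIdx => S.twistBasis p.1 p.2 :=
  S.basis_indep

theorem Θ_eq_self_iff_coeff_hermitian {r : List S.Λ → List S.Λ → ℂ} {R : S.carrier}
    (hR : R = ∑ J ∈ S.P, ∑ J' ∈ S.P, r J J' • S.twistBasis J J') :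
    S.Θ R = R ↔ ∀ J ∈ S.P, ∀ J' ∈ S.P, r J' J = starRingEnd ℂ (r J J') := by
  have hΘR : S.Θ R = ∑ J ∈ S.P, ∑ J' ∈ S.P, starRingEnd ℂ (r J' J) • S.twistBasis J J' := by
    rw [Finset.sum_comm, hR, S.Θ_sum]
    refine Finset.sum_congr rfl fun J hJ => ?_
    rw [S.Θ_sum]
    refine Finset.sum_congr rfl fun J' hJ' => ?_
    rw [S.Θ_smul, S.Θ_twistBasis (S.P_sub J hJ) (S.P_sub J' hJ')]
  rw [hΘR, hR, sum_P_sum_P, sum_P_sum_P]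
  refine ⟨fun h J hJ J' hJ' => ?_, fun h => Fintype.sum_congr _ _ fun p => ?_⟩
  · exact (Fintype.linearIndependent_iffₛ.mp S.linearIndependent_twistBasis _ _ h
      ⟨⟨J', hJ'⟩, ⟨J, hJ⟩⟩).symm
  · rw [h _ p.2.2 _ p.1.2]

theorem twist_zero_left (y : S.carrier) : S.twist 0 y = 0 := by
  simpa using S.twist_smul_left 0 0 y

theorem twist_zero_right (x : S.carrier) : S.twist x 0 = 0 := by
  simpa using S.twist_smul_right 0 x 0

theorem Θ_twist_Θ {A B : S.carrier} (hA : A ∈ S.Aplus) (hB : B ∈ S.Aplus) :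
    S.Θ (S.twist (S.Θ A) B) = S.twist (S.Θ B) A := by
  have hA' := S.mem_span_C hA
  have hB' := S.mem_span_C hB
  clear hA hB
  induction hA', hB' using Submodule.span_induction₂ with
  | mem_mem x y hx hy =>
    obtain ⟨⟨M, hM⟩, rfl⟩ := hx
    obtain ⟨⟨M', hM'⟩, rfl⟩ := hy
    exact S.Θ_twistBasis (S.P_sub M hM) (S.P_sub M' hM')
  | zero_left y _ => rw [Θ_zero, twist_zero_left, Θ_zero, twist_zero_right]
  | zero_right x _ => rw [Θ_zero, twist_zero_right, Θ_zero, twist_zero_left]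
  | add_left x y z _ _ _ h1 h2 =>
    rw [S.Θ_add, S.twist_add_left, S.Θ_add, h1, h2, S.twist_add_right]
  | add_right x y z _ _ _ h1 h2 =>
    rw [S.twist_add_right, S.Θ_add, h1, h2, S.Θ_add, S.twist_add_left]
  | smul_left r x y _ _ h =>
    rw [S.Θ_smul, S.twist_smul_left, S.Θ_smul, h, starRingEnd_self_apply, S.twist_smul_right]
  | smul_right r x y _ _ h =>
    rw [S.twist_smul_right, S.Θ_smul, h, S.Θ_smul, S.twist_smul_left]

theorem forall_Tr_Θ_mul_iff_twist {R : S.carrier} :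
    (∀ A, S.Tr (S.Θ A * R) = starRingEnd ℂ (S.Tr (A * R))) ↔
      ∀ A ∈ S.Aplus, ∀ B ∈ S.Aplus,
        S.Tr (S.twist (S.Θ A) B * R) = starRingEnd ℂ (S.Tr (S.twist (S.Θ B) A * R)) := by
  refine ⟨fun h A hA B hB => by rw [← h, S.Θ_twist_Θ hB hA], fun h A => ?_⟩
  induction S.mem_span_twistBasis A using Submodule.span_induction with
  | mem x hx =>
    obtain ⟨⟨⟨J, hJ⟩, ⟨J', hJ'⟩⟩, rfl⟩ := hx
    rw [S.Θ_twistBasis (S.P_sub J hJ) (S.P_sub J' hJ')]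
    exact h _ (S.C_mem_adjoin (S.P_sub J' hJ')) _ (S.C_mem_adjoin (S.P_sub J hJ))
  | zero => simp [Θ_zero]
  | add x y _ _ hx hy => rw [S.Θ_add, add_mul, map_add, hx, hy, add_mul, map_add, map_add]
  | smul z x _ hx =>
    rw [S.Θ_smul, smul_mul_assoc, map_smul, hx, smul_mul_assoc, map_smul, smul_eq_mul,
      smul_eq_mul, map_mul (starRingEnd ℂ)]

end MajoranaSetting

/-- for `ω(A) = Tr(A·R)` with density matrix
`R = ∑ r_{𝔍𝔍'} Θ(C_𝔍)∘C_𝔍'`, the conditions (a) `ω` reflection invariant,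
(b) `Θ(R) = R`, (c) the matrix `r` hermitian, (d) the form
`⟨A,B⟩ = ω(Θ(A)∘B)` hermitian on `𝔄₊`, are all equivalent. -/
theorem reflection_invariant_functionals (S : MajoranaSetting)
    (r : List S.Λ → List S.Λ → ℂ) (R : S.carrier)
    (hR : R = ∑ J ∈ S.P, ∑ J' ∈ S.P, r J J' • S.twist (S.Θ (S.C J)) (S.C J')) :
    ((∀ A : S.carrier, S.Tr (S.Θ A * R) = starRingEnd ℂ (S.Tr (A * R))) ↔
      S.Θ R = R) ∧
    (S.Θ R = R ↔ ∀ J ∈ S.P, ∀ J' ∈ S.P, r J' J = starRingEnd ℂ (r J J')) ∧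
    (S.Θ R = R ↔ ∀ A ∈ S.Aplus, ∀ B ∈ S.Aplus,
      S.Tr (S.twist (S.Θ A) B * R)
        = starRingEnd ℂ (S.Tr (S.twist (S.Θ B) A * R))) :=
  ⟨S.forall_Tr_Θ_mul_iff, S.Θ_eq_self_iff_coeff_hermitian hR,
    S.forall_Tr_Θ_mul_iff.symm.trans S.forall_Tr_Θ_mul_iff_twist⟩
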